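/- arXiv:2008.05405 — 2 statements merged into one kernel-verified Lean document; each statement's English description precedes it below -/
import Mathlib

section
/- The 5×5 substochastic matrix T_5 obtained from the cat-map transition matrix T_0 by replacing its fifth row with zeros has leading eigenvalue λ_5 = ((1+√2)/2)(3-√5). -/
open Matrix Real Module.End

noncomputable def catT0 : Matrix (Fin 5) (Fin 5) ℂ :=
  !![((3 - Real.sqrt 5) / 2 : ℝ), 0, ((3 - Real.sqrt 5) / 2 : ℝ), (Real.sqrt 5 - 2 : ℝ), 0;
     ((3 - Real.sqrt 5) / 2 : ℝ), 0, ((3 - Real.sqrt 5) / 2 : ℝ), (Real.sqrt 5 - 2 : ℝ), 0;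
     ((3 - Real.sqrt 5) / 2 : ℝ), 0, ((3 - Real.sqrt 5) / 2 : ℝ), (Real.sqrt 5 - 2 : ℝ), 0;
     0, ((Real.sqrt 5 - 1) / 2 : ℝ), 0, 0, ((3 - Real.sqrt 5) / 2 : ℝ);
     0, ((Real.sqrt 5 - 1) / 2 : ℝ), 0, 0, ((3 - Real.sqrt 5) / 2 : ℝ)]

noncomputable def catHole (i : Fin 5) : Matrix (Fin 5) (Fin 5) ℂ :=
  Matrix.updateRow catT0 i 0

/-!
`T_5` maps the plane of vectors `(x, x, x, y, 0)` into itself by `(x, y) ↦ (2a x + b y, c x)`, where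
`a = (3 - √5)/2`, `b = √5 - 2`, `c = (√5 - 1)/2`, and every eigenvector of a nonzero eigenvalue lies
in that plane. Its eigenvalues solve `μ² = 2aμ + bc`, and since `bc = a²` they are `a(1 ± √2)`;
the one of larger modulus is `a(1 + √2) = ((1 + √2)/2)(3 - √5)`.
-/

section HoleMatrix

variable {K : Type*} [Field K]

def holeMatrix (a b c : K) : Matrix (Fin 5) (Fin 5) K :=
  !![a, 0, a, b, 0;
     a, 0, a, b, 0;
     a, 0, a, b, 0;
     0, c, 0, 0, a;
     0, 0, 0, 0, 0]

theorem holeMatrix_mulVec (a b c : K) (v : Fin 5 → K) :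
    holeMatrix a b c *ᵥ v =
      ![a * v 0 + a * v 2 + b * v 3, a * v 0 + a * v 2 + b * v 3, a * v 0 + a * v 2 + b * v 3,
        c * v 1 + a * v 4, 0] := by
  ext i
  fin_cases i <;> simp [holeMatrix, mulVec, dotProduct, Fin.sum_univ_five]

theorem hasEigenvalue_holeMatrix {a b c μ : K} (hμ : μ ≠ 0) (h : μ ^ 2 = 2 * a * μ + b * c) :
    HasEigenvalue (toLin' (holeMatrix a b c)) μ := by
  refine hasEigenvalue_of_hasEigenvector (x := ![μ, μ, μ, c, 0]) ⟨?_, ?_⟩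
  · have hrow : a * μ + a * μ + b * c = μ * μ := by linear_combination -h
    rw [mem_eigenspace_iff, toLin'_apply, holeMatrix_mulVec]
    ext i
    fin_cases i <;> simp [hrow, mul_comm]
  · intro hv
    exact hμ (by simpa using congr_fun hv 0)

theorem sq_eq_of_hasEigenvalue_holeMatrix {a b c μ : K} (hμ : μ ≠ 0)
    (h : HasEigenvalue (toLin' (holeMatrix a b c)) μ) : μ ^ 2 = 2 * a * μ + b * c := by
  obtain ⟨v, hv⟩ := h.exists_hasEigenvector
  have e := hv.apply_eq_smul
  rw [toLin'_apply, holeMatrix_mulVec] at e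
  have e0 : a * v 0 + a * v 2 + b * v 3 = μ * v 0 := by simpa using congr_fun e 0
  have e1 : a * v 0 + a * v 2 + b * v 3 = μ * v 1 := by simpa using congr_fun e 1
  have e2 : a * v 0 + a * v 2 + b * v 3 = μ * v 2 := by simpa using congr_fun e 2
  have hv1 : v 1 = v 0 := mul_left_cancel₀ hμ (e1.symm.trans e0)
  have hv2 : v 2 = v 0 := mul_left_cancel₀ hμ (e2.symm.trans e0)
  have e3 : c * v 1 + a * v 4 = μ * v 3 := by simpa using congr_fun e 3
  have hv4 : v 4 = 0 := by simpa [hμ] using congr_fun e 4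
  have hv0 : v 0 ≠ 0 := by
    intro h0
    have hv3 : v 3 = 0 := by
      have : μ * v 3 = 0 := by rw [← e3, hv1, h0, hv4]; ring
      exact (mul_eq_zero.mp this).resolve_left hμ
    refine hv.2 (funext fun i => ?_)
    fin_cases i <;> simp [h0, hv1, hv2, hv3, hv4]
  refine mul_right_cancel₀ hv0 ?_
  linear_combination (-μ) * e0 - b * e3 + a * μ * hv2 + b * c * hv1 + a * b * hv4

end HoleMatrix

theorem norm_le_of_sq_eq_two_mul_add_sq {a : ℝ} (ha : 0 ≤ a) {μ : ℂ}
    (h : μ ^ 2 = 2 * a * μ + a ^ 2) : ‖μ‖ ≤ (1 + √2) * a := by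
  have h2 : ((√2 : ℝ) : ℂ) ^ 2 = 2 := by exact_mod_cast sq_sqrt zero_le_two
  have hfac : (μ - ((1 + √2) * a : ℝ)) * (μ - ((1 - √2) * a : ℝ)) = 0 := by
    push_cast
    linear_combination h - (a : ℂ) ^ 2 * h2
  have hsa : 0 ≤ √2 * a := mul_nonneg (sqrt_nonneg 2) ha
  rcases mul_eq_zero.mp hfac with hμ | hμ <;>
    rw [sub_eq_zero.mp hμ, Complex.norm_real, norm_eq_abs, abs_le] <;>
    constructor <;> linarith

theorem holeMatrix_leading_eigenvalue {a b c : ℝ} (ha : 0 < a) (hbc : b * c = a ^ 2) :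
    HasEigenvalue (toLin' (holeMatrix (a : ℂ) b c)) ((1 + √2) * a : ℝ) ∧
      ∀ μ, HasEigenvalue (toLin' (holeMatrix (a : ℂ) b c)) μ → ‖μ‖ ≤ (1 + √2) * a := by
  have hbc' : (b : ℂ) * c = (a : ℂ) ^ 2 := by exact_mod_cast hbc
  refine ⟨hasEigenvalue_holeMatrix ?_ ?_, fun μ hμ => ?_⟩
  · exact_mod_cast (by positivity : (1 + √2) * a ≠ 0)
  · have hroot : ((1 + √2) * a) ^ 2 = 2 * a * ((1 + √2) * a) + a ^ 2 := by
      linear_combination a ^ 2 * sq_sqrt (zero_le_two (α := ℝ))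
    rw [hbc']
    exact_mod_cast hroot
  · rcases eq_or_ne μ 0 with rfl | hμ0
    · rw [norm_zero]; positivity
    · exact norm_le_of_sq_eq_two_mul_add_sq ha.le
        (hbc' ▸ sq_eq_of_hasEigenvalue_holeMatrix hμ0 hμ)

theorem catHole_four_eq_holeMatrix : catHole 4 =
    holeMatrix (((3 - √5) / 2 : ℝ) : ℂ) ((√5 - 2 : ℝ) : ℂ) (((√5 - 1) / 2 : ℝ) : ℂ) := by
  ext i j
  fin_cases i <;> fin_cases j <;> simp [catHole, catT0, holeMatrix, updateRow_apply]

theorem stmt_10 :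
    Module.End.HasEigenvalue (Matrix.toLin' (catHole 4))
        (((1 + Real.sqrt 2) / 2 * (3 - Real.sqrt 5) : ℝ) : ℂ) ∧
      ∀ μ : ℂ, Module.End.HasEigenvalue (Matrix.toLin' (catHole 4)) μ →
        ‖μ‖ ≤ (1 + Real.sqrt 2) / 2 * (3 - Real.sqrt 5) := by
  have hρ : (1 + √2) / 2 * (3 - √5) = (1 + √2) * ((3 - √5) / 2) := by ring
  have ha : 0 < (3 - √5) / 2 := by
    have : √5 < 3 := (sqrt_lt' three_pos).mpr (by norm_num)
    linarith
  have hbc : (√5 - 2) * ((√5 - 1) / 2) = ((3 - √5) / 2) ^ 2 := by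
    linear_combination (1 / 4 : ℝ) * sq_sqrt (by norm_num : (0 : ℝ) ≤ 5)
  rw [catHole_four_eq_holeMatrix, hρ]
  exact holeMatrix_leading_eigenvalue ha hbc
end

section
/- For each i ∈ {1,2,3,4}, the 5×5 substochastic matrix T_i obtained from the cat-map transition matrix T_0 by zeroing out row i has leading eigenvalue 3-√5. -/
open Matrix Real Module.End

/-!
Write `a = (3 - √5) / 2`, `b = √5 - 2`, `c = (√5 - 1) / 2`. The matrix `T₀` has rank two:
`T₀ = U V`, where `U` is the 5×2 indicator matrix of the row blocks `{1, 2, 3}` and `{4, 5}`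
and the rows of `V` are the two distinct rows of `T₀`; zeroing row `i` of `T₀` zeroes row `i`
of `U`. Since `X ^ 5 χ(V Uᵢ) = X ^ 2 χ(Uᵢ V)`, the nonzero eigenvalues of `Tᵢ` are those of
the 2×2 matrix `V Uᵢ`. When the second or fourth row is removed this matrix is triangular with
diagonal `(2a, a)`; when the first or third row is removed it is `!![a, b; c, a]`, with
eigenvalues `2a` and `0` because `b c = a²`.
-/

open Polynomial

theorem Matrix.hasEigenvalue_toLin'_iff_isRoot_charpoly {R n : Type*} [CommRing R] [IsDomain R]
    [Fintype n] [DecidableEq n] (A : Matrix n n R) (μ : R) :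
    HasEigenvalue (toLin' A) μ ↔ A.charpoly.IsRoot μ := by
  rw [hasEigenvalue_iff_isRoot_charpoly, charpoly_toLin']

theorem Matrix.charpoly_fin_two_of_trace_of_det {R : Type*} [CommRing R] [Nontrivial R]
    (M : Matrix (Fin 2) (Fin 2) R) {p q : R} (htr : M.trace = p + q) (hdet : M.det = p * q) :
    M.charpoly = (X - C p) * (X - C q) := by
  rw [charpoly_fin_two, htr, hdet, C_add, C_mul]
  ring

noncomputable def catU : Matrix (Fin 5) (Fin 2) ℂ :=
  !![1, 0; 1, 0; 1, 0; 0, 1; 0, 1]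

noncomputable def catV : Matrix (Fin 2) (Fin 5) ℂ :=
  !![((3 - Real.sqrt 5) / 2 : ℝ), 0, ((3 - Real.sqrt 5) / 2 : ℝ), (Real.sqrt 5 - 2 : ℝ), 0;
     0, ((Real.sqrt 5 - 1) / 2 : ℝ), 0, 0, ((3 - Real.sqrt 5) / 2 : ℝ)]

theorem catT0_eq_catU_mul_catV : catT0 = catU * catV := by
  ext i j
  fin_cases i <;> fin_cases j <;> simp [catT0, catU, catV, Matrix.mul_apply, Fin.sum_univ_two]

theorem catHole_eq_updateRow_catU_mul_catV (i : Fin 5) :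
    catHole i = catU.updateRow i 0 * catV := by
  rw [updateRow_mul, zero_vecMul, ← catT0_eq_catU_mul_catV, catHole]

theorem sqrt_five_sub_two_mul_half_sqrt_five_sub_one :
    (Real.sqrt 5 - 2) * ((Real.sqrt 5 - 1) / 2) = ((3 - Real.sqrt 5) / 2) ^ 2 := by
  nlinarith [Real.sq_sqrt (show (0:ℝ) ≤ 5 by norm_num)]

theorem charpoly_catV_mul_updateRow_catU (i : Fin 5) (hi : i ≠ 4) :
    ∃ ν : ℝ, 0 ≤ ν ∧ ν ≤ 3 - Real.sqrt 5 ∧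
      (catV * catU.updateRow i 0).charpoly =
        (X - C ((3 - Real.sqrt 5 : ℝ) : ℂ)) * (X - C (ν : ℂ)) := by
  have h5 : Real.sqrt 5 ≤ 3 := by
    rw [Real.sqrt_le_left (by norm_num)]; norm_num
  have hbc : ((Real.sqrt 5 : ℂ) - 2) * (((Real.sqrt 5 : ℂ) - 1) / 2) =
      ((3 - (Real.sqrt 5 : ℂ)) / 2) ^ 2 := by
    exact_mod_cast sqrt_five_sub_two_mul_half_sqrt_five_sub_one
  suffices ∃ ν : ℝ, 0 ≤ ν ∧ ν ≤ 3 - Real.sqrt 5 ∧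
      (catV * catU.updateRow i 0).trace = ((3 - Real.sqrt 5 : ℝ) : ℂ) + ν ∧
      (catV * catU.updateRow i 0).det = ((3 - Real.sqrt 5 : ℝ) : ℂ) * ν by
    obtain ⟨ν, hν0, hνρ, htr, hdet⟩ := this
    exact ⟨ν, hν0, hνρ, charpoly_fin_two_of_trace_of_det _ htr hdet⟩
  simp only [trace_fin_two, det_fin_two, Matrix.mul_apply, Fin.sum_univ_five]
  obtain rfl | rfl | rfl | rfl : i = 0 ∨ i = 1 ∨ i = 2 ∨ i = 3 := by omega
  · refine ⟨0, le_rfl, by linarith, by simp [catU, catV], ?_⟩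
    simp [catU, catV]
    linear_combination -hbc
  · exact ⟨(3 - Real.sqrt 5) / 2, by linarith, by linarith, by simp [catU, catV],
      by simp [catU, catV]⟩
  · refine ⟨0, le_rfl, by linarith, by simp [catU, catV], ?_⟩
    simp [catU, catV]
    linear_combination -hbc
  · exact ⟨(3 - Real.sqrt 5) / 2, by linarith, by linarith, by simp [catU, catV],
      by simp [catU, catV]⟩

theorem charpoly_catHole (i : Fin 5) (hi : i ≠ 4) :
    ∃ ν : ℝ, 0 ≤ ν ∧ ν ≤ 3 - Real.sqrt 5 ∧
      (catHole i).charpoly =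
        X ^ 3 * ((X - C ((3 - Real.sqrt 5 : ℝ) : ℂ)) * (X - C (ν : ℂ))) := by
  obtain ⟨ν, hν0, hνρ, hχ⟩ := charpoly_catV_mul_updateRow_catU i hi
  refine ⟨ν, hν0, hνρ, ?_⟩
  rw [catHole_eq_updateRow_catU_mul_catV, charpoly_mul_comm_of_le _ _ (by simp), hχ]
  simp

theorem stmt_11 (i : Fin 5) (hi : i ≠ 4) :
    Module.End.HasEigenvalue (Matrix.toLin' (catHole i)) ((3 - Real.sqrt 5 : ℝ) : ℂ) ∧
      ∀ μ : ℂ, Module.End.HasEigenvalue (Matrix.toLin' (catHole i)) μ →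
        ‖μ‖ ≤ 3 - Real.sqrt 5 := by
  obtain ⟨ν, hν0, hνρ, hχ⟩ := charpoly_catHole i hi
  have hρ : 0 ≤ 3 - Real.sqrt 5 := hν0.trans hνρ
  simp only [hasEigenvalue_toLin'_iff_isRoot_charpoly, hχ, IsRoot.def, eval_mul, eval_pow, eval_X,
    eval_sub, eval_C, mul_eq_zero, pow_eq_zero_iff three_ne_zero, sub_eq_zero]
  refine ⟨by simp, ?_⟩
  rintro μ (rfl | rfl | rfl)
  · simpa using hρ
  · rw [Complex.norm_real, Real.norm_of_nonneg hρ]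
  · rwa [Complex.norm_real, Real.norm_of_nonneg hν0]
end
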